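/- arXiv:1201.3911 — 5 statements merged into one kernel-verified Lean document; each statement's English description precedes it below -/
import Mathlib

section
/- Let Ω be a compact ℝ^d-system with bounded complexity: for every ε > 0 there is N(ε) such that every (ρ_L, ε)-separated subset of Ω has cardinality at most N(ε), uniformly in L > 0. Then the translation action on Ω is equicontinuous: for every ε > 0 there exists δ > 0 such that whenever T, T' ∈ Ω satisfy ρ(T, T') < δ, one has ρ(T − x, T' − x) < ε for all x ∈ ℝ^d. -/
/-!
Bounded complexity makes `Ω` totally bounded for the sup-metric `sup_x ρ(T − x, T' − x)`:
finitely many points that are pairwise far apart under some translation can be translated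
together so that all the witnessing translations lie in one cube `[0, L]^d`, where they form a
`(ρ_L, η)`-separated set. An `η`-net for the sup-metric covers the compact space `Ω` by finitely
many `ρ`-closed sets of sup-diameter at most `2η`. Disjoint members of this cover are a positive
`ρ`-distance apart, so `ρ`-close points lie in two members that meet, and are therefore at most
`4η` apart in the sup-metric.
-/

open Set

/-- The metric `ρ_L(T₁,T₂) = sup_{x ∈ [0,L]^d} ρ(T₁ − x, T₂ − x)` on an ℝ^d-system
(`act T x` stands for `T − x`). -/
noncomputable def rhoL {d : ℕ} {Ω : Type*} [MetricSpace Ω]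
    (act : Ω → EuclideanSpace ℝ (Fin d) → Ω) (L : ℝ) (T₁ T₂ : Ω) : ℝ :=
  sSup ((fun x => dist (act T₁ x) (act T₂ x)) ''
    {x : EuclideanSpace ℝ (Fin d) | ∀ i, x i ∈ Set.Icc (0 : ℝ) L})

/-- `X` is `(ρ_L, ε)`-separated: distinct elements of `X` are at `ρ_L`-distance ≥ ε. -/
def IsSeparatedSet {d : ℕ} {Ω : Type*} [MetricSpace Ω]
    (act : Ω → EuclideanSpace ℝ (Fin d) → Ω) (ε L : ℝ) (X : Set Ω) : Prop :=
  ∀ T₁ ∈ X, ∀ T₂ ∈ X, T₁ ≠ T₂ → ε ≤ rhoL act L T₁ T₂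

open Filter Uniformity

theorem uniformEquicontinuous_of_forall_exists_finset_dist_le {ι X α : Type*} [UniformSpace X]
    [CompactSpace X] [PseudoMetricSpace α] {F : ι → X → α} (hF : ∀ i, Continuous (F i))
    (hnet : ∀ η > 0, ∃ s : Finset X, ∀ x, ∃ y ∈ s, ∀ i, dist (F i x) (F i y) ≤ η) :
    UniformEquicontinuous F := by
  rw [Metric.uniformEquicontinuous_iff_right]
  intro ε hε
  obtain ⟨s, hs⟩ := hnet (ε / 5) (by positivity)
  set C : X → Set X := fun y => {x | ∀ i, dist (F i x) (F i y) ≤ ε / 5}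
  have hC : ∀ y, IsClosed (C y) := fun y => by
    simp only [C, ofPred_forall]
    exact isClosed_iInter fun i => isClosed_le ((hF i).dist continuous_const) continuous_const
  have hmeet : ∀ y y', ∀ᶠ p in 𝓤 X, p.1 ∈ C y → p.2 ∈ C y' → (C y ∩ C y').Nonempty := by
    intro y y'
    by_cases h : (C y ∩ C y').Nonempty
    · exact Eventually.of_forall fun _ _ _ => h
    rw [← Set.not_disjoint_iff_nonempty_inter, not_not] at h
    obtain ⟨V, hV, hdisj⟩ := h.exists_uniform_thickening (hC y).isCompact (hC y')
    filter_upwards [hV] with p hp h₁ h₂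
    exact (hdisj.ne_of_mem (mem_iUnion₂_of_mem h₁ hp)
      (mem_iUnion₂_of_mem h₂ (refl_mem_uniformity hV)) rfl).elim
  filter_upwards [(eventually_all_finset s).2 fun y _ => (eventually_all_finset s).2
    fun y' _ => hmeet y y'] with p hp i
  obtain ⟨y, hy, h₁⟩ := hs p.1
  obtain ⟨y', hy', h₂⟩ := hs p.2
  obtain ⟨z, hzy, hzy'⟩ := hp y hy y' hy' h₁ h₂
  have hz₁ : dist (F i p.1) (F i z) ≤ 2 * (ε / 5) := by
    linarith [dist_triangle (F i p.1) (F i y) (F i z), h₁ i, dist_comm (F i y) (F i z), hzy i]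
  have hz₂ : dist (F i z) (F i p.2) ≤ 2 * (ε / 5) := by
    linarith [dist_triangle (F i z) (F i y') (F i p.2), h₂ i, dist_comm (F i y') (F i p.2), hzy' i]
  linarith [dist_triangle (F i p.1) (F i z) (F i p.2)]

theorem exists_finset_forall_exists_rel_of_card_le {X : Type*} {r : X → X → Prop}
    (hrefl : ∀ x, r x x) (hsymm : ∀ x y, r x y → r y x) (N : ℕ)
    (hN : ∀ s : Finset X, (s : Set X).Pairwise (fun a b => ¬ r a b) → s.card ≤ N) :
    ∃ s : Finset X, ∀ x, ∃ y ∈ s, r x y := by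
  classical
  by_contra! hfar
  have hlarge : ∀ n, ∃ s : Finset X, s.card = n ∧ (s : Set X).Pairwise (fun a b => ¬ r a b) := by
    intro n
    induction n with
    | zero => exact ⟨∅, rfl, by simp⟩
    | succ n ih =>
      obtain ⟨s, hcard, hs⟩ := ih
      obtain ⟨x, hx⟩ := hfar s
      have hxs : x ∉ s := fun hmem => hx x hmem (hrefl x)
      refine ⟨insert x s, by rw [Finset.card_insert_of_notMem hxs, hcard], ?_⟩
      rw [Finset.coe_insert]
      exact hs.insert fun y hy _ => ⟨hx y hy, fun h => hx y hy (hsymm y x h)⟩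
  obtain ⟨s, hcard, hs⟩ := hlarge (N + 1)
  have := hN s hs
  omega

theorem exists_forall_sub_mem_cube {d : ℕ} {W : Set (EuclideanSpace ℝ (Fin d))}
    (hW : Bornology.IsBounded W) :
    ∃ c : EuclideanSpace ℝ (Fin d), ∃ L > 0, ∀ w ∈ W, ∀ i, (w - c) i ∈ Icc (0 : ℝ) L := by
  obtain ⟨R, hR, hWR⟩ := hW.exists_pos_norm_le
  refine ⟨WithLp.toLp 2 fun _ => -R, 2 * R, by positivity, fun w hw i => ?_⟩
  have hwi := abs_le.1 ((PiLp.norm_apply_le w i).trans (hWR w hw))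
  simp only [PiLp.sub_apply, sub_neg_eq_add, mem_Icc]
  constructor <;> linarith [hwi.1, hwi.2]

section BoundedComplexity

variable {d : ℕ} {Ω : Type*} [MetricSpace Ω] (act : Ω → EuclideanSpace ℝ (Fin d) → Ω)

def HasBoundedComplexity : Prop :=
  ∀ ε : ℝ, 0 < ε → ∃ N : ℕ, ∀ L : ℝ, 0 < L → ∀ X : Set Ω, IsSeparatedSet act ε L X → X.encard ≤ N

theorem dist_act_le_rhoL [BoundedSpace Ω] {L : ℝ} {x : EuclideanSpace ℝ (Fin d)}
    (hx : ∀ i, x i ∈ Icc (0 : ℝ) L) (T₁ T₂ : Ω) :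
    dist (act T₁ x) (act T₂ x) ≤ rhoL act L T₁ T₂ := by
  refine le_csSup ⟨Metric.diam (univ : Set Ω), ?_⟩ ⟨x, hx, rfl⟩
  rintro _ ⟨y, -, rfl⟩
  exact Metric.dist_le_diam_of_mem (Bornology.isBounded_univ.2 ‹_›) trivial trivial

variable {act}

theorem exists_card_le_of_pairwise_not_forall_dist_le [BoundedSpace Ω]
    (hadd : ∀ (T : Ω) (x y : EuclideanSpace ℝ (Fin d)), act (act T x) y = act T (x + y))
    (hbdd : HasBoundedComplexity act) {η : ℝ} (hη : 0 < η) :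
    ∃ N : ℕ, ∀ s : Finset Ω,
      (s : Set Ω).Pairwise (fun T T' => ¬ ∀ x, dist (act T x) (act T' x) ≤ η) → s.card ≤ N := by
  classical
  obtain ⟨N, hN⟩ := hbdd η hη
  refine ⟨N, fun s hs => ?_⟩
  have hs' : ∀ T ∈ s, ∀ T' ∈ s, T ≠ T' → ∃ x, η < dist (act T x) (act T' x) :=
    fun T hT T' hT' hne => by simpa only [not_forall, not_le] using hs hT hT' hne
  choose! w hw using hs'
  obtain ⟨c, L, hL, hcube⟩ :=
    exists_forall_sub_mem_cube ((s ×ˢ s).image fun p => w p.1 p.2).finite_toSet.isBounded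
  have hfar : ∀ T ∈ s, ∀ T' ∈ s, T ≠ T' →
      η < dist (act (act T c) (w T T' - c)) (act (act T' c) (w T T' - c)) := by
    intro T hT T' hT' hne
    simpa only [hadd, add_sub_cancel] using hw T hT T' hT' hne
  have hinj : Set.InjOn (act · c) s := by
    intro T hT T' hT' heq
    by_contra hne
    have := hfar T hT T' hT' hne
    rw [show act T c = act T' c from heq, dist_self] at this
    linarith
  have hsep : IsSeparatedSet act η L (s.image (act · c) : Set Ω) := by
    simp only [IsSeparatedSet, Finset.coe_image, forall_mem_image]
    intro T hT T' hT' hne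
    refine (hfar T hT T' hT' (ne_of_apply_ne (act · c) hne)).le.trans (dist_act_le_rhoL act (fun i => hcube _ ?_ i) _ _)
    exact Finset.mem_coe.2 (Finset.mem_image.2 ⟨(T, T'), Finset.mem_product.2 ⟨hT, hT'⟩, rfl⟩)
  have := hN L hL _ hsep
  rw [Set.encard_coe_eq_coe_finsetCard, Finset.card_image_of_injOn hinj] at this
  exact_mod_cast this

theorem exists_finset_forall_dist_act_le [BoundedSpace Ω]
    (hadd : ∀ (T : Ω) (x y : EuclideanSpace ℝ (Fin d)), act (act T x) y = act T (x + y))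
    (hbdd : HasBoundedComplexity act) {η : ℝ} (hη : 0 < η) :
    ∃ s : Finset Ω, ∀ T, ∃ S ∈ s, ∀ x, dist (act T x) (act S x) ≤ η :=
  let ⟨N, hN⟩ := exists_card_le_of_pairwise_not_forall_dist_le hadd hbdd hη
  exists_finset_forall_exists_rel_of_card_le (fun T x => by rw [dist_self]; exact hη.le)
    (fun T T' h x => by rw [dist_comm]; exact h x) N hN

end BoundedComplexity

theorem equicontinuous_of_bounded_complexity_general
    {d : ℕ} {Ω : Type*} [MetricSpace Ω] [CompactSpace Ω]
    (act : Ω → EuclideanSpace ℝ (Fin d) → Ω)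
    (hadd : ∀ (T : Ω) (x y : EuclideanSpace ℝ (Fin d)), act (act T x) y = act T (x + y))
    (hcont : Continuous fun p : Ω × EuclideanSpace ℝ (Fin d) => act p.1 p.2)
    (hbdd : ∀ ε : ℝ, 0 < ε → ∃ N : ℕ, ∀ L : ℝ, 0 < L →
        ∀ X : Set Ω, IsSeparatedSet act ε L X → X.encard ≤ N) :
    ∀ ε : ℝ, 0 < ε → ∃ δ : ℝ, 0 < δ ∧ ∀ T T' : Ω, dist T T' < δ →
      ∀ x : EuclideanSpace ℝ (Fin d), dist (act T x) (act T' x) < ε := by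
  have hequi : UniformEquicontinuous fun x T => act T x :=
    uniformEquicontinuous_of_forall_exists_finset_dist_le
      (fun x => hcont.comp (continuous_id.prodMk continuous_const))
      (fun η hη => exists_finset_forall_dist_act_le hadd hbdd hη)
  exact Metric.uniformEquicontinuous_iff.1 hequi

/-- A compact ℝ^d-system with bounded complexity (every `(ρ_L, ε)`-separated set has
cardinality at most `N(ε)`, uniformly in `L`) has equicontinuous translational
dynamics. -/
theorem equicontinuous_of_bounded_complexity
    {d : ℕ} (hd : 1 ≤ d) {Ω : Type*} [MetricSpace Ω] [CompactSpace Ω]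
    (act : Ω → EuclideanSpace ℝ (Fin d) → Ω)
    (hzero : ∀ T : Ω, act T 0 = T)
    (hadd : ∀ (T : Ω) (x y : EuclideanSpace ℝ (Fin d)), act (act T x) y = act T (x + y))
    (hcont : Continuous fun p : Ω × EuclideanSpace ℝ (Fin d) => act p.1 p.2)
    (hbdd : ∀ ε : ℝ, 0 < ε → ∃ N : ℕ, ∀ L : ℝ, 0 < L →
        ∀ X : Set Ω, IsSeparatedSet act ε L X → X.encard ≤ N) :
    ∀ ε : ℝ, 0 < ε → ∃ δ : ℝ, 0 < δ ∧ ∀ T T' : Ω, dist T T' < δ →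
      ∀ x : EuclideanSpace ℝ (Fin d), dist (act T x) (act T' x) < ε :=
  equicontinuous_of_bounded_complexity_general act hadd hcont hbdd
end

section
/- Let c = (3 log 3 − 2 log 2)^{-1} and define f : [1, 3] → ℝ by f(x) = c/x² for 1 ≤ x ≤ 2 and f(x) = 3c/x² for 2 < x ≤ 3. Then f is a fixed point of the operator 𝒯 at all interior points: (4/3) f(2x) = f(x) for all x ∈ (1, 3/2); (4/9) f(2x/3) = f(x) for all x ∈ (3/2, 2); and (4/9) f(2x/3) + (2/3) f(x) = f(x) for all x ∈ (2, 3). Moreover f satisfies the volume normalization ∫₁³ x f(x) dx = 1. -/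
/-!
On `[1, 2]` and on `(2, 3]` the candidate is a multiple of `x⁻²`, and `x⁻²` is homogeneous of
degree `-2`: rescaling the argument by `2` or `2/3` multiplies it by `1/4` or `9/4`, which the
weights `4/3` and `4/9` of `𝒯` compensate once the factor `3` on `(2, 3]` is accounted for.
For the normalization, `x f(x)` is `c/x` on `[1, 2]` and `3c/x` on `(2, 3]`, so its integral is
`c (log 2 + 3 log (3/2)) = c (3 log 3 - 2 log 2) = 1`.
-/

open Real Set MeasureTheory intervalIntegral

section InvIntegral

variable {f : ℝ → ℝ} {a b k : ℝ}

theorem intervalIntegrable_of_eqOn_const_mul_inv (ha : 0 < a) (hab : a ≤ b)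
    (hf : EqOn f (fun x => k * x⁻¹) (Ioc a b)) : IntervalIntegrable f volume a b := by
  have hinv : IntervalIntegrable (fun x : ℝ => x⁻¹) volume a b :=
    intervalIntegrable_inv_iff.2 <| Or.inr <| by
      rw [uIcc_of_le hab]
      exact fun h => ha.not_ge h.1
  exact (hinv.const_mul k).congr (by rw [uIoc_of_le hab]; exact hf.symm)

theorem integral_eq_mul_log_of_eqOn_const_mul_inv (ha : 0 < a) (hab : a ≤ b)
    (hf : EqOn f (fun x => k * x⁻¹) (Ioc a b)) : ∫ x in a..b, f x = k * log (b / a) := by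
  rw [integral_congr_ae (ae_of_all _ fun x hx => hf (uIoc_of_le hab ▸ hx)),
    intervalIntegral.integral_const_mul, integral_inv_of_pos ha (ha.trans_le hab)]

end InvIntegral

theorem three_mul_log_three_sub_two_mul_log_two_pos : 0 < 3 * log 3 - 2 * log 2 := by
  have : 3 * log 3 - 2 * log 2 = log (27 / 4) := by
    rw [log_div (by norm_num) (by norm_num), show (27 : ℝ) = 3 ^ 3 by norm_num,
      show (4 : ℝ) = 2 ^ 2 by norm_num, log_pow, log_pow]
    push_cast
    ring
  rw [this]
  exact log_pos (by norm_num)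

noncomputable def lengthDensity (c x : ℝ) : ℝ := if x ≤ 2 then c / x ^ 2 else 3 * c / x ^ 2

namespace lengthDensity

variable {c x : ℝ}

theorem of_le (hx : x ≤ 2) : lengthDensity c x = c / x ^ 2 := if_pos hx

theorem of_lt (hx : 2 < x) : lengthDensity c x = 3 * c / x ^ 2 := if_neg hx.not_ge

theorem four_thirds_mul_two_mul (h1 : 1 < x) (h2 : x ≤ 2) :
    4 / 3 * lengthDensity c (2 * x) = lengthDensity c x := by
  rw [of_lt (by linarith), of_le h2]
  field_simp
  ring

theorem four_ninths_mul_two_mul_div_three (hx0 : x ≠ 0) (hx : x ≤ 2) :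
    4 / 9 * lengthDensity c (2 * x / 3) = lengthDensity c x := by
  rw [of_le (by linarith), of_le hx]
  field_simp
  ring

theorem four_ninths_mul_two_mul_div_three_add (h2 : 2 < x) (h3 : x ≤ 3) :
    4 / 9 * lengthDensity c (2 * x / 3) + 2 / 3 * lengthDensity c x = lengthDensity c x := by
  rw [of_le (by linarith), of_lt h2]
  have : x ≠ 0 := by linarith
  field_simp
  ring

theorem mul_eqOn_Ioc_one_two :
    EqOn (fun x => x * lengthDensity c x) (fun x => c * x⁻¹) (Ioc 1 2) :=
  fun x hx => by
    have : x ≠ 0 := by linarith [hx.1]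
    simp only [of_le hx.2]
    field_simp

theorem mul_eqOn_Ioc_two_three :
    EqOn (fun x => x * lengthDensity c x) (fun x => 3 * c * x⁻¹) (Ioc 2 3) :=
  fun x hx => by
    have : x ≠ 0 := by linarith [hx.1]
    simp only [of_lt hx.1]
    field_simp

theorem integral_id_mul :
    ∫ x in (1 : ℝ)..3, x * lengthDensity c x = c * (3 * log 3 - 2 * log 2) := by
  rw [← integral_add_adjacent_intervals
      (intervalIntegrable_of_eqOn_const_mul_inv one_pos one_le_two mul_eqOn_Ioc_one_two)
      (intervalIntegrable_of_eqOn_const_mul_inv two_pos (by norm_num) mul_eqOn_Ioc_two_three),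
    integral_eq_mul_log_of_eqOn_const_mul_inv one_pos one_le_two mul_eqOn_Ioc_one_two,
    integral_eq_mul_log_of_eqOn_const_mul_inv two_pos (by norm_num) mul_eqOn_Ioc_two_three,
    div_one, log_div (by norm_num) (by norm_num)]
  ring

end lengthDensity

/-- The function `f(x) = c/x²` on `[1,2]` and `3c/x²` on `(2,3]`, with
`c = (3 log 3 − 2 log 2)⁻¹`, is a fixed point (at all interior points) of the
renormalized transition-consistency operator `𝒯` of the variable-tile-length fusion
tiling of ℝ, and satisfies the volume normalization `∫₁³ x f(x) dx = 1`. -/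
theorem fixed_point_of_transition_operator :
    ∀ c : ℝ, c = (3 * Real.log 3 - 2 * Real.log 2)⁻¹ →
    ∀ f : ℝ → ℝ, (∀ x : ℝ, f x = if x ≤ 2 then c / x ^ 2 else 3 * c / x ^ 2) →
      (∀ x ∈ Set.Ioo (1 : ℝ) (3 / 2), (4 / 3) * f (2 * x) = f x) ∧
      (∀ x ∈ Set.Ioo (3 / 2 : ℝ) 2, (4 / 9) * f (2 * x / 3) = f x) ∧
      (∀ x ∈ Set.Ioo (2 : ℝ) 3, (4 / 9) * f (2 * x / 3) + (2 / 3) * f x = f x) ∧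
      (∫ x in (1 : ℝ)..3, x * f x) = 1 := by
  rintro c rfl f hf
  obtain rfl : f = lengthDensity _ := funext hf
  refine ⟨fun x hx => ?_, fun x hx => ?_, fun x hx => ?_, ?_⟩
  · exact lengthDensity.four_thirds_mul_two_mul hx.1 (by linarith [hx.2])
  · exact lengthDensity.four_ninths_mul_two_mul_div_three (by linarith [hx.1]) hx.2.le
  · exact lengthDensity.four_ninths_mul_two_mul_div_three_add hx.1 hx.2.le
  · rw [lengthDensity.integral_id_mul]
    exact inv_mul_cancel₀ three_mul_log_three_sub_two_mul_log_two_pos.ne'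
end

section
/- Let γ ∈ ℂ satisfy 3^γ = 2^γ + 1 (complex powers of positive real bases, a^γ = exp(γ log a)), set λ = (3/2)^{γ−1}, and define f on (1, 3) with values in ℂ by f(x) = x^{−(γ+1)} for 1 < x < 2 and f(x) = 3^γ · x^{−(γ+1)} for 2 < x < 3. Then f is an eigenfunction of the operator 𝒯 with eigenvalue λ: (4/3) f(2x) = λ f(x) for all x ∈ (1, 3/2); (4/9) f(2x/3) = λ f(x) for all x ∈ (3/2, 2); and (4/9) f(2x/3) + (2/3) f(x) = λ f(x) for all x ∈ (2, 3). -/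
/-!
Put `a = 2^γ`, `b = 3^γ` and `p x = x^{-(γ+1)}`, so that `λ = 2b / (3a)`. Since
`p (c x) = c^{-(γ+1)} p x` for `c, x > 0`, every branch of `𝒯f` is a multiple of `p x`, and
comparing coefficients leaves `(4/3) · b / (2a) = λ`, `(4/9) · 3b / (2a) = λ` and
`2b / (3a) + 2b / 3 = λ b`; only the last one uses `b = a + 1`.
-/

open Complex

lemma Complex.cpow_neg_add_one {c : ℂ} (hc : c ≠ 0) (s : ℂ) :
    c ^ (-(s + 1)) = (c ^ s * c)⁻¹ := by
  rw [cpow_neg, cpow_add _ _ hc, cpow_one]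

lemma Complex.ofReal_mul_cpow_neg_add_one {c x : ℝ} (hc : 0 < c) (hx : 0 ≤ x) (s : ℂ) :
    ((c * x : ℝ) : ℂ) ^ (-(s + 1)) = ((c : ℂ) ^ s * c)⁻¹ * (x : ℂ) ^ (-(s + 1)) := by
  rw [ofReal_mul, mul_cpow_ofReal_nonneg hc.le hx,
    cpow_neg_add_one (ofReal_ne_zero.mpr hc.ne')]

lemma Complex.two_thirds_cpow (s : ℂ) : (2 / 3 : ℂ) ^ s = 2 ^ s / 3 ^ s := by
  simpa using div_cpow_ofReal_nonneg (a := 2) (b := 3) (by norm_num) (by norm_num) s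

lemma Complex.three_halves_cpow (s : ℂ) : (3 / 2 : ℂ) ^ s = 3 ^ s / 2 ^ s := by
  simpa using div_cpow_ofReal_nonneg (a := 3) (b := 2) (by norm_num) (by norm_num) s

lemma Complex.three_halves_cpow_sub_one (s : ℂ) :
    (3 / 2 : ℂ) ^ (s - 1) = 2 * 3 ^ s / (3 * 2 ^ s) := by
  rw [cpow_sub _ _ (by norm_num), cpow_one, three_halves_cpow]
  field_simp

/-- If `γ ∈ ℂ` satisfies `3^γ = 2^γ + 1` (complex powers of positive real bases), and
`λ = (3/2)^(γ−1)`, then `f(x) = x^{−(γ+1)}` on `(1,2)` and `f(x) = 3^γ x^{−(γ+1)}` on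
`(2,3)` is an eigenfunction of the transition-consistency operator `𝒯` with
eigenvalue `λ`. -/
theorem eigenfunction_of_transition_operator
    (γ : ℂ) (hγ : (3 : ℂ) ^ γ = (2 : ℂ) ^ γ + 1)
    (lam : ℂ) (hlam : lam = ((3 / 2 : ℂ)) ^ (γ - 1))
    (f : ℝ → ℂ)
    (hf : ∀ x : ℝ, f x = if x < 2 then (x : ℂ) ^ (-(γ + 1))
      else (3 : ℂ) ^ γ * (x : ℂ) ^ (-(γ + 1))) :
    (∀ x ∈ Set.Ioo (1 : ℝ) (3 / 2), (4 / 3 : ℂ) * f (2 * x) = lam * f x) ∧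
    (∀ x ∈ Set.Ioo (3 / 2 : ℝ) 2, (4 / 9 : ℂ) * f (2 * x / 3) = lam * f x) ∧
    (∀ x ∈ Set.Ioo (2 : ℝ) 3,
      (4 / 9 : ℂ) * f (2 * x / 3) + (2 / 3 : ℂ) * f x = lam * f x) := by
  have h2 : (2 : ℂ) ^ γ ≠ 0 := by simp [cpow_eq_zero_iff]
  have h3 : (3 : ℂ) ^ γ ≠ 0 := by simp [cpow_eq_zero_iff]
  have hscale (x : ℝ) (hx : 0 ≤ x) :=
    ofReal_mul_cpow_neg_add_one (c := 2 / 3) (by norm_num) hx γ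
  subst hlam
  refine ⟨?_, ?_, ?_⟩
  · rintro x ⟨hx1, hx2⟩
    rw [hf, hf, if_neg (by linarith), if_pos (by linarith),
      ofReal_mul_cpow_neg_add_one two_pos (by linarith), three_halves_cpow_sub_one]
    push_cast
    field_simp
    ring
  · rintro x ⟨hx1, hx2⟩
    rw [hf, hf, if_pos (by linarith), if_pos hx2, mul_div_right_comm, hscale x (by linarith),
      three_halves_cpow_sub_one]
    push_cast
    rw [two_thirds_cpow]
    field_simp
    ring
  · rintro x ⟨hx1, hx2⟩
    rw [hf, hf, if_pos (by linarith), if_neg (by linarith), mul_div_right_comm,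
      hscale x (by linarith), three_halves_cpow_sub_one]
    push_cast
    rw [two_thirds_cpow, hγ]
    field_simp
    ring
end

section
/- If λ ∈ ℂ satisfies |λ| ≥ 1 and λ ≠ 1, then (log 2) · log|λ| + log(3/2) · log|3λ − 2| > 0. Consequently, the only complex number λ with |λ| ≥ 1 satisfying (log 2) · log|λ| + log(3/2) · log|3λ − 2| = 0 is λ = 1. -/
/-- `z` lies strictly inside the segment from `u` to `t • z - (t - 1) • u`, so if both ends
were in the closed unit ball, strict convexity would put `z` in the open one. -/
theorem one_lt_norm_smul_sub_smul {E : Type*} [NormedAddCommGroup E] [NormedSpace ℝ E]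
    [StrictConvexSpace ℝ E] {t : ℝ} (ht : 1 < t) {u z : E} (hu : ‖u‖ ≤ 1) (hz : 1 ≤ ‖z‖)
    (hne : z ≠ u) : 1 < ‖t • z - (t - 1) • u‖ := by
  by_contra! hw
  have ht₀ : t ≠ 0 := by positivity
  have hwu : t • z - (t - 1) • u ≠ u := by
    intro h
    exact hne (smul_right_injective E ht₀ (by linear_combination (norm := module) h))
  have hz_eq : t⁻¹ • (t • z - (t - 1) • u) + (1 - t⁻¹) • u = z := by
    match_scalars <;> field_simp
    ring
  have hz_lt := norm_combo_lt_of_ne hw hu hwu (a := t⁻¹) (b := 1 - t⁻¹) (by positivity)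
    (sub_pos.2 (inv_lt_one_of_one_lt₀ ht)) (add_sub_cancel _ _)
  rw [hz_eq] at hz_lt
  linarith

theorem one_lt_norm_three_mul_sub_two {lam : ℂ} (h : 1 ≤ ‖lam‖) (hne : lam ≠ 1) :
    1 < ‖3 * lam - 2‖ := by
  have h₃ : 3 * lam - 2 = (3 : ℝ) • lam - ((3 : ℝ) - 1) • (1 : ℂ) := by
    rw [Complex.real_smul, Complex.real_smul]
    push_cast
    ring
  rw [h₃]
  exact one_lt_norm_smul_sub_smul (by norm_num) (by simp) h hne

/-- If `λ ∈ ℂ` has `|λ| ≥ 1` and `λ ≠ 1`, then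
`log 2 · log|λ| + log(3/2) · log|3λ − 2| > 0`; consequently the only `λ` with `|λ| ≥ 1`
for which this quantity vanishes is `λ = 1`. -/
theorem spectral_estimate_transition_operator :
    (∀ lam : ℂ, 1 ≤ ‖lam‖ → lam ≠ 1 →
      0 < Real.log 2 * Real.log (‖lam‖) +
          Real.log (3 / 2) * Real.log (‖3 * lam - 2‖)) ∧
    (∀ lam : ℂ, 1 ≤ ‖lam‖ →
      Real.log 2 * Real.log (‖lam‖) +
          Real.log (3 / 2) * Real.log (‖3 * lam - 2‖) = 0 →
      lam = 1) := by
  have pos : ∀ lam : ℂ, 1 ≤ ‖lam‖ → lam ≠ 1 →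
      0 < Real.log 2 * Real.log (‖lam‖) + Real.log (3 / 2) * Real.log (‖3 * lam - 2‖) := by
    intro lam h hne
    have h₁ : 0 ≤ Real.log 2 * Real.log ‖lam‖ :=
      mul_nonneg (Real.log_nonneg (by norm_num)) (Real.log_nonneg h)
    have h₂ : 0 < Real.log (3 / 2) * Real.log ‖3 * lam - 2‖ :=
      mul_pos (Real.log_pos (by norm_num))
        (Real.log_pos (one_lt_norm_three_mul_sub_two h hne))
    linarith
  exact ⟨pos, fun lam h hzero => by_contra fun hne => (pos lam h hne).ne' hzero⟩
end

section
/- Let M be the 4×4 integer matrix with rows (1, 1, 1, 1), (3, 0, 3, 0), (3, 3, 0, 0), (9, 0, 0, 0), and let v be the vector ((1 + √13)/2, 3, 3, 3(√13 − 1)/2). Then every entry of v is strictly positive, M v = ((7 + √13)/2) · v, and every complex eigenvalue μ of M with μ ≠ (7 + √13)/2 satisfies |μ| < (7 + √13)/2; that is, (7 + √13)/2 is the Perron–Frobenius eigenvalue of M with Perron eigenvector v. -/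
/-!
The characteristic polynomial of `M` factors over `ℤ` as `(X + 3)² (X² - 7X + 9)`, so the
complex eigenvalues of `M` are `-3` and `(7 ± √13)/2`, and both `3` and `|7 - √13|/2` are
smaller than `(7 + √13)/2`.
-/

open Polynomial Matrix Module.End

def shearTransitionMatrix (R : Type*) [Ring R] : Matrix (Fin 4) (Fin 4) R :=
  !![1, 1, 1, 1; 3, 0, 3, 0; 3, 3, 0, 0; 9, 0, 0, 0]

theorem charpoly_shearTransitionMatrix (R : Type*) [CommRing R] :
    (shearTransitionMatrix R).charpoly = (X + 3) ^ 2 * (X ^ 2 - 7 * X + 9) := by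
  rw [charpoly, det_succ_row_zero]
  simp only [Nat.succ_eq_add_one, Nat.reduceAdd, shearTransitionMatrix, charmatrix_apply, of_apply,
    det_fin_three, submatrix_apply, Fin.succAbove, cons_val, Fin.reduceSucc, Fin.reduceCastSucc,
    Fin.sum_univ_four, Fin.coe_ofNat_eq_mod, diagonal_apply_eq, map_one, ↓reduceIte, map_zero,
    ne_eq, Fin.reduceEq, not_false_eq_true, diagonal_apply_ne, map_ofNat, Nat.reduceMod, even_two,
    Even.neg_pow, Fin.reduceLT]
  ring

theorem shearTransitionMatrix_map {R S : Type*} [Ring R] [Ring S] (f : R →+* S) :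
    (shearTransitionMatrix R).map f = shearTransitionMatrix S := by
  ext i j
  fin_cases i <;> fin_cases j <;> simp [shearTransitionMatrix, map_ofNat]

section SqrtThirteen

variable {K : Type*} [Field K] [NeZero (2 : K)] {s : K}

theorem shearTransitionMatrix_mulVec_eq_smul (hs : s * s = 13) :
    shearTransitionMatrix K *ᵥ ![(1 + s) / 2, 3, 3, 3 * (s - 1) / 2] =
      ((7 + s) / 2) • ![(1 + s) / 2, 3, 3, 3 * (s - 1) / 2] := by
  ext i
  fin_cases i <;>
    simp only [shearTransitionMatrix, Fin.isValue, Fin.zero_eta, Fin.mk_one, Fin.reduceFinMk,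
      mulVec_cons, mulVec_empty, Pi.add_apply, Pi.smul_apply, Function.comp_apply, cons_val_zero,
      cons_val_one, cons_val, head_cons, tail_cons, smul_eq_mul, mul_one, mul_zero, add_zero,
      zero_add] <;>
    grind [two_ne_zero (α := K)]

theorem isRoot_X_sq_sub_seven_X_add_nine_iff (hs : s * s = 13) (μ : K) :
    (X ^ 2 - 7 * X + 9 : K[X]).IsRoot μ ↔ μ = (7 + s) / 2 ∨ μ = (7 - s) / 2 := by
  have hdisc : discrim 1 (-7) 9 = s * s := by rw [discrim, hs]; norm_num
  convert quadratic_eq_zero_iff one_ne_zero hdisc μ using 1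
  · simp only [IsRoot, eval_add, eval_sub, eval_mul, eval_pow, eval_X, eval_ofNat]
    constructor <;> intro h <;> linear_combination h
  · norm_num

theorem hasEigenvalue_shearTransitionMatrix_iff (hs : s * s = 13) (μ : K) :
    HasEigenvalue (toLin' (shearTransitionMatrix K)) μ ↔
      μ = -3 ∨ μ = (7 + s) / 2 ∨ μ = (7 - s) / 2 := by
  rw [hasEigenvalue_iff_isRoot_charpoly, charpoly_toLin', charpoly_shearTransitionMatrix,
    IsRoot.def, eval_mul, mul_eq_zero, ← IsRoot.def, ← IsRoot.def,
    isRoot_X_sq_sub_seven_X_add_nine_iff hs, IsRoot.def, eval_pow, pow_eq_zero_iff two_ne_zero,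
    eval_add, eval_X, eval_ofNat, add_eq_zero_iff_eq_neg]

end SqrtThirteen

/-- The transition matrix `M` of the direct-product-variation fusion rule has
Perron–Frobenius eigenvalue `(7 + √13)/2` with strictly positive Perron eigenvector
`v = ((1 + √13)/2, 3, 3, 3(√13 − 1)/2)`: every entry of `v` is positive, `M v = ((7 + √13)/2) v`,
and every other complex eigenvalue `μ` of `M` satisfies `|μ| < (7 + √13)/2`. -/
theorem perron_frobenius_of_shear_transition_matrix
    (M : Matrix (Fin 4) (Fin 4) ℝ)
    (hM : M = !![1, 1, 1, 1; 3, 0, 3, 0; 3, 3, 0, 0; 9, 0, 0, 0])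
    (v : Fin 4 → ℝ)
    (hv : v = ![(1 + Real.sqrt 13) / 2, 3, 3, 3 * (Real.sqrt 13 - 1) / 2]) :
    (∀ i : Fin 4, 0 < v i) ∧
    M.mulVec v = ((7 + Real.sqrt 13) / 2) • v ∧
    (∀ μ : ℂ, Module.End.HasEigenvalue
        (Matrix.toLin' (M.map (fun r : ℝ => (r : ℂ)))) μ →
      μ ≠ (((7 + Real.sqrt 13) / 2 : ℝ) : ℂ) →
      ‖μ‖ < (7 + Real.sqrt 13) / 2) := by
  obtain rfl : M = shearTransitionMatrix ℝ := hM
  subst hv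
  have hs : √13 * √13 = 13 := Real.mul_self_sqrt (by norm_num)
  have h1 : 1 < √13 := by rw [Real.lt_sqrt] <;> norm_num
  refine ⟨?_, shearTransitionMatrix_mulVec_eq_smul hs, fun μ hμ hne ↦ ?_⟩
  · intro i
    fin_cases i <;>
      simp only [Fin.isValue, Fin.zero_eta, Fin.mk_one, Fin.reduceFinMk, cons_val_zero,
        cons_val_one, cons_val] <;>
      linarith
  have hsC : (√13 : ℂ) * √13 = 13 := by exact_mod_cast hs
  have hmap : (shearTransitionMatrix ℝ).map (fun r : ℝ => (r : ℂ)) = shearTransitionMatrix ℂ :=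
    shearTransitionMatrix_map Complex.ofRealHom
  rw [hmap, hasEigenvalue_shearTransitionMatrix_iff hsC] at hμ
  rcases hμ with rfl | rfl | rfl
  · rw [norm_neg, Complex.norm_ofNat]
    linarith
  · exact absurd (by push_cast; rfl) hne
  · rw [show (7 - (√13 : ℂ)) / 2 = ((7 - √13) / 2 : ℝ) by push_cast; rfl, Complex.norm_real,
      Real.norm_eq_abs, abs_lt]
    constructor <;> linarith
end
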